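/- arXiv:1503.00199 — 9 statements merged into one kernel-verified Lean document; each statement's English description precedes it below -/
import Mathlib

section
/- Define the Farey product F_n as the product of all fractions h/k with 1 ≤ h ≤ k ≤ n and gcd(h,k)=1, and the unreduced Farey product G_n = ∏_{k=1}^n ∏_{j=1}^k (j/k). Then G_n = ∏_{ℓ=1}^n F_{⌊n/ℓ⌋}. -/
open Finset

/-- The Farey product: product of all reduced fractions h/k with 1 ≤ h ≤ k ≤ n, gcd(h,k)=1. -/
def fareyProd (n : ℕ) : ℚ :=
  ∏ k ∈ Finset.Icc 1 n, ∏ h ∈ (Finset.Icc 1 k).filter (fun h => Nat.gcd h k = 1), (h : ℚ) / k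

/-- The unreduced Farey product G_n = ∏_{k=1}^n ∏_{j=1}^k (j/k). -/
def unreducedFareyProd (n : ℕ) : ℚ :=
  ∏ k ∈ Finset.Icc 1 n, ∏ j ∈ Finset.Icc 1 k, (j : ℚ) / k

theorem unreducedFareyProd_eq_prod_fareyProd (n : ℕ) (hn : 0 < n) :
    unreducedFareyProd n = ∏ ℓ ∈ Finset.Icc 1 n, fareyProd (n / ℓ) := by
  unfold unreducedFareyProd fareyProd
  simp only [Finset.prod_sigma']
  refine Finset.prod_nbij'
    (fun p => ⟨Nat.gcd p.2 p.1, ⟨p.1 / Nat.gcd p.2 p.1, p.2 / Nat.gcd p.2 p.1⟩⟩)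
    (fun q => ⟨q.1 * q.2.1, q.1 * q.2.2⟩) ?_ ?_ ?_ ?_ ?_
  · rintro ⟨k, j⟩ hm
    simp only [Finset.mem_sigma, Finset.mem_Icc, Finset.mem_filter] at hm ⊢
    obtain ⟨⟨hk1, hkn⟩, hj1, hjk⟩ := hm
    have hg : 0 < Nat.gcd j k := Nat.gcd_pos_of_pos_left _ hj1
    have hgk : Nat.gcd j k ∣ k := Nat.gcd_dvd_right _ _
    have hgj : Nat.gcd j k ∣ j := Nat.gcd_dvd_left _ _
    have hk0 : 0 < k := hj1.trans hjk
    exact ⟨⟨hg, (Nat.le_of_dvd hk0 hgk).trans hkn⟩,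
      ⟨(Nat.one_le_div_iff hg).2 (Nat.le_of_dvd hk0 hgk), Nat.div_le_div_right hkn⟩,
      ⟨(Nat.one_le_div_iff hg).2 (Nat.le_of_dvd hj1 hgj), Nat.div_le_div_right hjk⟩,
      Nat.coprime_div_gcd_div_gcd hg⟩
  · rintro ⟨d, q, h⟩ hm
    simp only [Finset.mem_sigma, Finset.mem_Icc, Finset.mem_filter] at hm ⊢
    obtain ⟨⟨hd1, hdn⟩, ⟨hq1, hqn⟩, ⟨hh1, hhq⟩, hcop⟩ := hm
    exact ⟨⟨Nat.mul_pos hd1 hq1, by rw [mul_comm]; exact (Nat.le_div_iff_mul_le hd1).1 hqn⟩,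
      Nat.mul_pos hd1 hh1, Nat.mul_le_mul le_rfl hhq⟩
  · rintro ⟨k, j⟩ hm
    simp only [Finset.mem_sigma, Finset.mem_Icc] at hm
    obtain ⟨⟨hk1, hkn⟩, hj1, hjk⟩ := hm
    have hgk : Nat.gcd j k ∣ k := Nat.gcd_dvd_right _ _
    have hgj : Nat.gcd j k ∣ j := Nat.gcd_dvd_left _ _
    simp [Nat.mul_div_cancel' hgk, Nat.mul_div_cancel' hgj]
  · rintro ⟨d, q, h⟩ hm
    simp only [Finset.mem_sigma, Finset.mem_Icc, Finset.mem_filter] at hm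
    obtain ⟨⟨hd1, hdn⟩, ⟨hq1, hqn⟩, ⟨hh1, hhq⟩, hcop⟩ := hm
    have hg : Nat.gcd (d * h) (d * q) = d := by rw [Nat.gcd_mul_left, hcop, mul_one]
    simp [hg, Nat.mul_div_cancel_left _ hd1]
  · rintro ⟨k, j⟩ hm
    simp only [Finset.mem_sigma, Finset.mem_Icc] at hm
    obtain ⟨⟨hk1, hkn⟩, hj1, hjk⟩ := hm
    have hg : 0 < Nat.gcd j k := Nat.gcd_pos_of_pos_left _ hj1
    have hgQ : (Nat.gcd j k : ℚ) ≠ 0 := by positivity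
    have hkQ : (k : ℚ) ≠ 0 := by positivity
    simp only
    rw [Nat.cast_div (Nat.gcd_dvd_left j k) hgQ, Nat.cast_div (Nat.gcd_dvd_right j k) hgQ]
    field_simp
end

section
/- With F_n the product of all reduced Farey fractions of order n and G_n = ∏_{k=1}^n ∏_{j=1}^k (j/k), Möbius inversion gives F_n = ∏_{ℓ=1}^n (G_{⌊n/ℓ⌋})^{μ(ℓ)}. -/
open Finset

/-- Reindexing pairs (d, m) with d*m ≤ n as pairs (k, d) with d ∣ k ≤ n. -/
lemma prod_Icc_div_sigma {M : Type*} [CommMonoid M] (n : ℕ) (F : ℕ → ℕ → M) :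
    ∏ d ∈ Finset.Icc 1 n, ∏ m ∈ Finset.Icc 1 (n / d), F d m
      = ∏ k ∈ Finset.Icc 1 n, ∏ d ∈ k.divisors, F d (k / d) := by
  rw [Finset.prod_sigma', Finset.prod_sigma']
  refine Finset.prod_nbij' (fun p => ⟨p.1 * p.2, p.1⟩) (fun p => ⟨p.2, p.1 / p.2⟩)
    ?_ ?_ ?_ ?_ ?_
  · rintro ⟨d, m⟩ hp
    simp only [Finset.mem_sigma, Finset.mem_Icc, Nat.mem_divisors] at hp ⊢
    obtain ⟨⟨hd1, hdn⟩, hm1, hmn⟩ := hp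
    have hd0 : 0 < d := hd1
    refine ⟨⟨?_, ?_⟩, ⟨⟨m, rfl⟩, ?_⟩⟩
    · exact Nat.one_le_iff_ne_zero.mpr (Nat.mul_ne_zero (Nat.one_le_iff_ne_zero.mp hd1) (Nat.one_le_iff_ne_zero.mp hm1))
    · calc d * m ≤ d * (n / d) := Nat.mul_le_mul_left d hmn
        _ ≤ n := Nat.mul_div_le n d
    · exact Nat.mul_ne_zero (Nat.one_le_iff_ne_zero.mp hd1) (Nat.one_le_iff_ne_zero.mp hm1)
  · rintro ⟨k, d⟩ hp
    simp only [Finset.mem_sigma, Finset.mem_Icc, Nat.mem_divisors] at hp ⊢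
    obtain ⟨⟨hk1, hkn⟩, hdk, hk0⟩ := hp
    have hd0 : 0 < d := Nat.pos_of_dvd_of_pos hdk hk1
    refine ⟨⟨hd0, le_trans (Nat.le_of_dvd hk1 hdk) hkn⟩, ?_, Nat.div_le_div_right hkn⟩
    exact Nat.one_le_div_iff hd0 |>.mpr (Nat.le_of_dvd hk1 hdk)
  · rintro ⟨d, m⟩ hp
    simp only [Finset.mem_sigma, Finset.mem_Icc] at hp
    have hd0 : 0 < d := hp.1.1
    simp [Nat.mul_div_cancel_left _ hd0]
  · rintro ⟨k, d⟩ hp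
    simp only [Finset.mem_sigma, Finset.mem_Icc, Nat.mem_divisors] at hp
    simp [Nat.mul_div_cancel' hp.2.1]
  · rintro ⟨d, m⟩ hp
    simp only [Finset.mem_sigma, Finset.mem_Icc] at hp
    have hd0 : 0 < d := hp.1.1
    simp [Nat.mul_div_cancel_left _ hd0]

/-- Cast helper: reducing a fraction of naturals. -/
lemma cast_div_reduce {d j k : ℕ} (hd : d ≠ 0) (hk : k ≠ 0) (hdj : d ∣ j) (hdk : d ∣ k) :
    (j : ℚ) / k = ((j / d : ℕ) : ℚ) / ((k / d : ℕ) : ℚ) := by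
  have hd' : (d : ℚ) ≠ 0 := Nat.cast_ne_zero.mpr hd
  rw [Nat.cast_div hdj hd', Nat.cast_div hdk hd', div_div_div_cancel_right₀]
  exact hd'

/-- Partition of 1..k by gcd with k. -/
lemma prod_Icc_eq_prod_divisors_coprime (k : ℕ) (hk : 0 < k) :
    ∏ j ∈ Finset.Icc 1 k, (j : ℚ) / k
      = ∏ e ∈ k.divisors, ∏ h ∈ (Finset.Icc 1 e).filter (fun h => Nat.gcd h e = 1), (h : ℚ) / e := by
  rw [← Nat.prod_div_divisors k
    (fun e => ∏ h ∈ (Finset.Icc 1 e).filter (fun h => Nat.gcd h e = 1), (h : ℚ) / e)]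
  rw [← Finset.prod_fiberwise_of_maps_to (g := fun j => Nat.gcd j k) (t := k.divisors)
    (fun j _ => Nat.mem_divisors.mpr ⟨Nat.gcd_dvd_right j k, hk.ne'⟩) (fun j => (j : ℚ) / k)]
  refine Finset.prod_congr rfl fun d hd => ?_
  obtain ⟨hdk, _⟩ := Nat.mem_divisors.mp hd
  have hd0 : 0 < d := Nat.pos_of_dvd_of_pos hdk hk
  refine Finset.prod_nbij' (fun j => j / d) (fun h => d * h) ?_ ?_ ?_ ?_ ?_
  · intro j hj
    simp only [Finset.mem_filter, Finset.mem_Icc] at hj ⊢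
    obtain ⟨⟨hj1, hjk⟩, hgcd⟩ := hj
    have hdj : d ∣ j := hgcd ▸ Nat.gcd_dvd_left j k
    refine ⟨⟨(Nat.one_le_div_iff hd0).mpr (Nat.le_of_dvd hj1 hdj), Nat.div_le_div_right hjk⟩, ?_⟩
    have := Nat.coprime_div_gcd_div_gcd (m := j) (n := k) (hgcd ▸ hd0)
    rwa [hgcd] at this
  · intro h hh
    simp only [Finset.mem_filter, Finset.mem_Icc] at hh ⊢
    obtain ⟨⟨hh1, hhkd⟩, hcop⟩ := hh
    refine ⟨⟨Nat.one_le_iff_ne_zero.mpr (Nat.mul_ne_zero hd0.ne' (Nat.one_le_iff_ne_zero.mp hh1)), ?_⟩, ?_⟩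
    · calc d * h ≤ d * (k / d) := Nat.mul_le_mul_left d hhkd
        _ = k := Nat.mul_div_cancel' hdk
    · have hgm : Nat.gcd (d * h) (d * (k / d)) = d * Nat.gcd h (k / d) := Nat.gcd_mul_left d h (k / d)
      rw [Nat.mul_div_cancel' hdk] at hgm
      rw [hgm, hcop, Nat.mul_one]
  · intro j hj
    simp only [Finset.mem_filter, Finset.mem_Icc] at hj
    exact Nat.mul_div_cancel' (hj.2 ▸ Nat.gcd_dvd_left j k)
  · intro h _
    exact Nat.mul_div_cancel_left h hd0
  · intro j hj
    simp only [Finset.mem_filter, Finset.mem_Icc] at hj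
    have hdj : d ∣ j := hj.2 ▸ Nat.gcd_dvd_left j k
    exact cast_div_reduce hd0.ne' hk.ne' hdj hdk

lemma fareyProd_pos (n : ℕ) : 0 < fareyProd n := by
  refine Finset.prod_pos fun k hk => Finset.prod_pos fun h hh => ?_
  simp only [Finset.mem_filter, Finset.mem_Icc] at hk hh
  have h1 : 0 < (h : ℚ) := by exact_mod_cast hh.1.1
  have h2 : 0 < (k : ℚ) := by exact_mod_cast hk.1
  positivity

lemma zpow_finset_sum {ι : Type*} {x : ℚ} (hx : x ≠ 0) (s : Finset ι) (e : ι → ℤ) :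
    x ^ (∑ i ∈ s, e i) = ∏ i ∈ s, x ^ e i := by
  classical
  induction s using Finset.cons_induction with
  | empty => simp
  | cons a s ha ih => rw [Finset.sum_cons, Finset.prod_cons, zpow_add₀ hx, ih]

lemma unreducedFareyProd_eq (n : ℕ) :
    unreducedFareyProd n = ∏ d ∈ Finset.Icc 1 n, fareyProd (n / d) := by
  unfold unreducedFareyProd fareyProd
  rw [prod_Icc_div_sigma n (fun _ k' =>
    ∏ h ∈ (Finset.Icc 1 k').filter (fun h => Nat.gcd h k' = 1), (h : ℚ) / k')]
  refine Finset.prod_congr rfl fun k hk => ?_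
  simp only [Finset.mem_Icc] at hk
  rw [Nat.prod_div_divisors k (fun e =>
    ∏ h ∈ (Finset.Icc 1 e).filter (fun h => Nat.gcd h e = 1), (h : ℚ) / e),
    ← prod_Icc_eq_prod_divisors_coprime k hk.1]

open ArithmeticFunction in
theorem fareyProd_eq_prod_unreduced_zpow (n : ℕ) (hn : 0 < n) :
    fareyProd n = ∏ ℓ ∈ Finset.Icc 1 n, (unreducedFareyProd (n / ℓ)) ^ (moebius ℓ : ℤ) := by
  symm
  have hsum : ∀ k : ℕ, (∑ d ∈ k.divisors, (moebius d : ℤ)) = if k = 1 then 1 else 0 := by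
    intro k
    have h : ((moebius * zeta : ArithmeticFunction ℤ)) k = (1 : ArithmeticFunction ℤ) k := by
      rw [moebius_mul_coe_zeta]
    rw [coe_mul_zeta_apply, one_apply] at h
    exact h
  calc ∏ ℓ ∈ Finset.Icc 1 n, (unreducedFareyProd (n / ℓ)) ^ (moebius ℓ : ℤ)
      = ∏ ℓ ∈ Finset.Icc 1 n, ∏ m ∈ Finset.Icc 1 (n / ℓ),
          (fareyProd (n / (ℓ * m))) ^ (moebius ℓ : ℤ) := by
        refine Finset.prod_congr rfl fun ℓ hℓ => ?_
        rw [unreducedFareyProd_eq, Finset.prod_zpow]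
        congr 1
        exact Finset.prod_congr rfl fun m _ => by rw [Nat.div_div_eq_div_mul]
    _ = ∏ k ∈ Finset.Icc 1 n, ∏ d ∈ k.divisors, (fareyProd (n / (d * (k / d)))) ^ (moebius d : ℤ) :=
        prod_Icc_div_sigma n (fun d m => (fareyProd (n / (d * m))) ^ (moebius d : ℤ))
    _ = ∏ k ∈ Finset.Icc 1 n, (fareyProd (n / k)) ^ (if k = 1 then (1 : ℤ) else 0) := by
        refine Finset.prod_congr rfl fun k hk => ?_
        rw [← hsum k, zpow_finset_sum (fareyProd_pos (n / k)).ne']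
        refine Finset.prod_congr rfl fun d hd => ?_
        rw [Nat.mul_div_cancel' (Nat.mem_divisors.mp hd).1]
    _ = fareyProd n := by
        rw [Finset.prod_eq_single_of_mem 1 (Finset.mem_Icc.mpr ⟨le_refl 1, hn⟩)]
        · simp
        · intro k _ hk1
          rw [if_neg hk1, zpow_zero]
end

section
/- The reciprocal unreduced Farey product 1/G_n, where G_n = ∏_{k=1}^n ∏_{j=1}^k (j/k), equals the product of all binomial coefficients in row n of Pascal's triangle: 1/G_n = ∏_{j=0}^n C(n,j). In particular 1/G_n is a positive integer. -/
open Finset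

lemma key_nat (n : ℕ) :
    (n + 1) ^ (n + 1) * ∏ j ∈ Finset.range (n + 1), n.choose j =
      (∏ j ∈ Finset.range (n + 2), (n + 1).choose j) * Nat.factorial (n+1) := by
  have h1 : (n + 1) ^ (n + 1) * ∏ j ∈ Finset.range (n + 1), n.choose j
      = ∏ j ∈ Finset.range (n + 1), (n + 1) * n.choose j := by
    rw [Finset.prod_mul_distrib, Finset.prod_const, Finset.card_range]
  rw [h1]
  have h2 : ∀ j ∈ Finset.range (n + 1), (n + 1) * n.choose j
      = (n + 1).choose (j + 1) * (j + 1) := by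
    intro j _
    rw [Nat.add_one_mul_choose_eq]
  rw [Finset.prod_congr rfl h2, Finset.prod_mul_distrib]
  have h3 : ∏ j ∈ Finset.range (n + 1), (j + 1) = Nat.factorial (n+1) := by
    rw [Finset.prod_range_add_one_eq_factorial]
  have h4 : ∏ j ∈ Finset.range (n + 2), (n + 1).choose j
      = (∏ j ∈ Finset.range (n + 1), (n + 1).choose (j + 1)) * (n + 1).choose 0 := by
    rw [Finset.prod_range_succ']
  rw [h3, h4, Nat.choose_zero_right, mul_one]

lemma farey_mul_eq_one (n : ℕ) :
    unreducedFareyProd n * ∏ j ∈ Finset.range (n + 1), (Nat.choose n j : ℚ) = 1 := by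
  induction n with
  | zero => simp [unreducedFareyProd]
  | succ n ih =>
    have hG : unreducedFareyProd (n + 1)
        = unreducedFareyProd n * ((Nat.factorial (n+1) : ℚ) / ((n : ℚ) + 1) ^ (n + 1)) := by
      unfold unreducedFareyProd
      rw [Finset.prod_Icc_succ_top (by omega : 1 ≤ n + 1)]
      congr 1
      rw [Finset.prod_div_distrib, Finset.prod_const]
      have : ∏ j ∈ Finset.Icc 1 (n + 1), (j : ℚ) = (Nat.factorial (n+1) : ℚ) := by
        rw [← Nat.cast_prod]
        congr 1
        rw [← Finset.Ico_add_one_right_eq_Icc, Finset.prod_Ico_eq_prod_range]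
        rw [← Finset.prod_range_add_one_eq_factorial (n + 1)]
        exact Finset.prod_congr rfl fun x _ => by ring
      rw [this, Nat.card_Icc]
      norm_num
    have hkey : ((∏ j ∈ Finset.range (n + 2), (n + 1).choose j : ℕ) : ℚ) * (Nat.factorial (n+1) : ℚ)
        = ((n : ℚ) + 1) ^ (n + 1) * ((∏ j ∈ Finset.range (n + 1), n.choose j : ℕ) : ℚ) := by
      rw [← Nat.cast_mul, ← key_nat n, Nat.cast_mul, Nat.cast_pow]
      push_cast
      ring
    have hfac : (Nat.factorial (n+1) : ℚ) ≠ 0 := by positivity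
    have hpow : ((n : ℚ) + 1) ^ (n + 1) ≠ 0 := by positivity
    have hG0 : unreducedFareyProd n ≠ 0 := by
      intro h0; rw [h0, zero_mul] at ih; exact one_ne_zero ih.symm
    rw [hG]
    field_simp
    push_cast at hkey ⊢
    linear_combination unreducedFareyProd n * hkey + ((n:ℚ)+1)^(n+1) * ih

theorem inv_unreducedFareyProd_eq_binomial_prod (n : ℕ) :
    (unreducedFareyProd n)⁻¹ = ∏ j ∈ Finset.range (n + 1), (Nat.choose n j : ℚ) ∧
      ∃ m : ℕ, 0 < m ∧ (unreducedFareyProd n)⁻¹ = (m : ℚ) := by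
  have h := farey_mul_eq_one n
  have hinv : (unreducedFareyProd n)⁻¹ = ∏ j ∈ Finset.range (n + 1), (Nat.choose n j : ℚ) :=
    inv_eq_of_mul_eq_one_right h
  refine ⟨hinv, ∏ j ∈ Finset.range (n + 1), n.choose j, ?_, ?_⟩
  · exact Finset.prod_pos fun j hj => Nat.choose_pos (by simpa using Nat.lt_succ_iff.mp (Finset.mem_range.mp hj))
  · rw [hinv]; push_cast; rfl
end

section
/- For every prime p and integer k ≥ 1, the p-adic valuation of Ḡ_{p^k} = ∏_{j=0}^{p^k} C(p^k, j) equals k·p^k − (p^k − 1)/(p − 1). -/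
open Finset

lemma aux_prod {p : ℕ} [Fact p.Prime] {ι : Type*} [DecidableEq ι] (s : Finset ι) (f : ι → ℕ)
    (hf : ∀ i ∈ s, f i ≠ 0) :
    padicValNat p (∏ i ∈ s, f i) = ∑ i ∈ s, padicValNat p (f i) := by
  induction s using Finset.induction with
  | empty => simp
  | insert _ _ hi ih =>
    rename_i a s
    rw [Finset.prod_insert hi, Finset.sum_insert hi,
      padicValNat.mul (hf a (mem_insert_self a s)) (Finset.prod_ne_zero_iff.2
        fun i his => hf i (mem_insert_of_mem his)),
      ih fun i his => hf i (mem_insert_of_mem his)]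

lemma aux_choose {p : ℕ} (hp : p.Prime) {k j : ℕ} (h1 : 1 ≤ j) (h2 : j ≤ p ^ k) :
    padicValNat p ((p ^ k).choose j) = k - padicValNat p j := by
  have : Fact p.Prime := ⟨hp⟩
  have h := Nat.Prime.emultiplicity_choose_prime_pow hp h2 (by omega)
  have h3 := padicValNat_eq_emultiplicity (p := p) (Nat.choose_pos h2).ne'
  rw [h] at h3
  rw [padicValNat_def (p := p) (by omega : j ≠ 0)]
  exact_mod_cast h3

lemma aux_digits {p : ℕ} (hp : p.Prime) (k : ℕ) : (p.digits (p ^ k)).sum = 1 := by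
  induction k with
  | zero =>
    simp [Nat.digits_def' hp.one_lt, Nat.mod_eq_of_lt hp.one_lt,
      Nat.div_eq_of_lt hp.one_lt]
  | succ n ih =>
    rw [pow_succ, Nat.digits_def' hp.one_lt (Nat.mul_pos (pow_pos hp.pos n) hp.pos),
      Nat.mul_mod_left, Nat.mul_div_cancel _ hp.pos]
    simpa using ih

lemma aux_fact {p : ℕ} (hp : p.Prime) (k : ℕ) :
    padicValNat p (Nat.factorial (p ^ k)) = (p ^ k - 1) / (p - 1) := by
  have : Fact p.Prime := ⟨hp⟩
  have h := sub_one_mul_padicValNat_factorial (p := p) (p ^ k)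
  rw [aux_digits hp] at h
  rw [← h, Nat.mul_div_cancel_left _ (by have := hp.one_lt; omega)]

lemma aux_val_le {p : ℕ} (hp : p.Prime) {k j : ℕ} (h1 : 1 ≤ j) (h2 : j ≤ p ^ k) :
    padicValNat p j ≤ k := by
  have : Fact p.Prime := ⟨hp⟩
  have hd : p ^ padicValNat p j ∣ j := pow_padicValNat_dvd
  have := Nat.le_of_dvd (by omega) hd
  exact (Nat.pow_le_pow_iff_right hp.one_lt).1 (this.trans h2)

theorem padicValNat_binomial_prod_pow (p : ℕ) (hp : p.Prime) (k : ℕ) (hk : 1 ≤ k) :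
    padicValNat p (∏ j ∈ Finset.range (p ^ k + 1), Nat.choose (p ^ k) j) =
      k * p ^ k - (p ^ k - 1) / (p - 1) := by
  have : Fact p.Prime := ⟨hp⟩
  have hpk : 1 ≤ p ^ k := Nat.one_le_pow _ _ hp.pos
  rw [aux_prod _ _ fun j hj => (Nat.choose_pos (by
    simpa using Nat.lt_succ_iff.1 (Finset.mem_range.1 hj))).ne']
  rw [Finset.range_eq_Ico,
    Finset.sum_eq_sum_Ico_succ_bot (by omega) (fun j => padicValNat p ((p ^ k).choose j))]
  simp only [Nat.choose_zero_right, padicValNat.one, zero_add, zero_add]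
  rw [Finset.sum_congr rfl (fun j hj => aux_choose hp (Finset.mem_Ico.1 hj).1
    (by have := (Finset.mem_Ico.1 hj).2; omega))]
  rw [sum_tsub_distrib _ (fun j hj => aux_val_le hp (Finset.mem_Ico.1 hj).1
    (by have := (Finset.mem_Ico.1 hj).2; omega))]
  have hsum : ∑ j ∈ Finset.Ico 1 (p ^ k + 1), padicValNat p j
      = padicValNat p (Nat.factorial (p ^ k)) := by
    rw [← Finset.prod_Ico_id_eq_factorial, aux_prod _ _ fun j hj => by
      have := (Finset.mem_Ico.1 hj).1; omega]
  rw [hsum, aux_fact hp, Finset.sum_const, Nat.card_Ico]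
  simp [mul_comm, Nat.add_sub_cancel]
end

section
/- For a prime p and n ≥ 1, ord_p(∏_{j=0}^n C(n,j)) = (1/(p−1))·(2·S_p(n) − (n−1)·d_p(n)), where d_p(m) is the sum of the base-p digits of m and S_p(n) = ∑_{j=0}^{n−1} d_p(j). -/
open Finset

/-- Sum of base-p digits of m. -/
def digitSum (p m : ℕ) : ℕ := (Nat.digits p m).sum

/-- Total digit summatory function S_p(n) = ∑ _{j=0}^{n-1} d_p(j). -/
def digitSummatory (p n : ℕ) : ℕ := ∑ j ∈ Finset.range n, digitSum p j

lemma kummer_int (p : ℕ) (hp : p.Prime) {k n : ℕ} (h : k ≤ n) :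
    ((p : ℤ) - 1) * padicValNat p (n.choose k) =
      (digitSum p k : ℤ) + (digitSum p (n - k) : ℤ) - (digitSum p n : ℤ) := by
  haveI : Fact p.Prime := ⟨hp⟩
  have hfac : n.choose k * Nat.factorial k * Nat.factorial (n - k) = Nat.factorial n := Nat.choose_mul_factorial_mul_factorial h
  have hv : padicValNat p (Nat.factorial n) =
      padicValNat p (n.choose k) + padicValNat p (Nat.factorial k) + padicValNat p (Nat.factorial (n - k)) := by
    rw [← hfac, padicValNat.mul (Nat.mul_ne_zero (Nat.choose_pos h).ne' (Nat.factorial_ne_zero k))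
        (Nat.factorial_ne_zero (n - k)),
      padicValNat.mul (Nat.choose_pos h).ne' (Nat.factorial_ne_zero k)]
  have l1 := sub_one_mul_padicValNat_factorial (p := p) n
  have l2 := sub_one_mul_padicValNat_factorial (p := p) k
  have l3 := sub_one_mul_padicValNat_factorial (p := p) (n - k)
  have d1 := Nat.digit_sum_le p n
  have d2 := Nat.digit_sum_le p k
  have d3 := Nat.digit_sum_le p (n - k)
  have hp1 : 1 ≤ p := hp.one_le
  have c1 : ((p : ℤ) - 1) * padicValNat p (Nat.factorial n) = (n : ℤ) - (digitSum p n : ℤ) := by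
    have := congrArg (Nat.cast : ℕ → ℤ) l1
    push_cast [Nat.cast_sub d1, Nat.cast_sub hp1] at this
    simpa [digitSum] using this
  have c2 : ((p : ℤ) - 1) * padicValNat p (Nat.factorial k) = (k : ℤ) - (digitSum p k : ℤ) := by
    have := congrArg (Nat.cast : ℕ → ℤ) l2
    push_cast [Nat.cast_sub d2, Nat.cast_sub hp1] at this
    simpa [digitSum] using this
  have c3 : ((p : ℤ) - 1) * padicValNat p (Nat.factorial (n - k)) =
      ((n : ℤ) - (k : ℤ)) - (digitSum p (n - k) : ℤ) := by
    have := congrArg (Nat.cast : ℕ → ℤ) l3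
    push_cast [Nat.cast_sub d3, Nat.cast_sub hp1, Nat.cast_sub h] at this
    simpa [digitSum] using this
  have cv : ((p : ℤ) - 1) * padicValNat p (Nat.factorial n) =
      ((p : ℤ) - 1) * padicValNat p (n.choose k) +
        ((p : ℤ) - 1) * padicValNat p (Nat.factorial k) + ((p : ℤ) - 1) * padicValNat p (Nat.factorial (n - k)) := by
    rw [hv]; push_cast; ring
  linarith [c1, c2, c3, cv]

theorem padicValNat_binomial_prod_digit_formula (p : ℕ) (hp : p.Prime) (n : ℕ) (hn : 1 ≤ n) :
    ((p : ℤ) - 1) * padicValNat p (∏ j ∈ Finset.range (n + 1), Nat.choose n j) =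
      2 * (digitSummatory p n : ℤ) - ((n : ℤ) - 1) * (digitSum p n : ℤ) := by
  haveI : Fact p.Prime := ⟨hp⟩
  have hne : ∀ j ∈ Finset.range (n + 1), n.choose j ≠ 0 := by
    intro j hj
    exact (Nat.choose_pos (Nat.lt_succ_iff.mp (Finset.mem_range.mp hj))).ne'
  have hsum : padicValNat p (∏ j ∈ Finset.range (n + 1), Nat.choose n j) =
      ∑ j ∈ Finset.range (n + 1), padicValNat p (n.choose j) := by
    have := Nat.factorization_prod hne
    have := congrArg (fun f => f p) this
    simpa [Nat.factorization_def _ hp, Finset.sum_apply'] using this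
  rw [hsum, Nat.cast_sum, Finset.mul_sum]
  have hterm : ∀ j ∈ Finset.range (n + 1),
      ((p : ℤ) - 1) * padicValNat p (n.choose j) =
        (digitSum p j : ℤ) + (digitSum p (n - j) : ℤ) - (digitSum p n : ℤ) := by
    intro j hj
    exact kummer_int p hp (Nat.lt_succ_iff.mp (Finset.mem_range.mp hj))
  rw [Finset.sum_congr rfl hterm]
  have hrefl : ∑ j ∈ Finset.range (n + 1), (digitSum p (n - j) : ℤ) =
      ∑ j ∈ Finset.range (n + 1), (digitSum p j : ℤ) := by
    rw [← Finset.sum_range_reflect (fun j => (digitSum p j : ℤ)) (n + 1)]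
    apply Finset.sum_congr rfl
    intro j hj
    have hj' : j < n + 1 := Finset.mem_range.mp hj
    have : n - j = n + 1 - 1 - j := by omega
    rw [this]
  have hS : ∑ j ∈ Finset.range (n + 1), (digitSum p j : ℤ) =
      (digitSummatory p n : ℤ) + (digitSum p n : ℤ) := by
    rw [Finset.sum_range_succ]
    congr 1
    simp [digitSummatory]
  simp only [Finset.sum_sub_distrib, Finset.sum_add_distrib, hrefl, hS,
    Finset.sum_const, Finset.card_range]
  push_cast
  ring
end

section
/- For every prime p and integer k ≥ 1, ord_p(F̄_{p^k}) − ord_p(F̄_{p^k−1}) = k·p^{k−1}·(p−1), where F̄_n is the reciprocal of the product of all reduced Farey fractions of order n (i.e. ord_p(F̄_n) = −ord_p(∏ h/k over 1 ≤ h ≤ k ≤ n with gcd(h,k)=1)). -/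
open Finset

/-- The reciprocal Farey product F̄_n. -/
def recipFareyProd (n : ℕ) : ℚ := (fareyProd n)⁻¹

lemma inner_ne_zero (c : ℕ) (hc : 1 ≤ c) :
    (∏ h ∈ (Finset.Icc 1 c).filter (fun h => Nat.gcd h c = 1), (h : ℚ) / c) ≠ 0 := by
  rw [Finset.prod_ne_zero_iff]
  intro h hh
  simp only [Finset.mem_filter, Finset.mem_Icc] at hh
  apply div_ne_zero
  · exact Nat.cast_ne_zero.mpr (Nat.one_le_iff_ne_zero.mp hh.1.1)
  · exact Nat.cast_ne_zero.mpr (Nat.one_le_iff_ne_zero.mp hc)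

lemma fareyProd_ne_zero (n : ℕ) : fareyProd n ≠ 0 := by
  unfold fareyProd
  rw [Finset.prod_ne_zero_iff]
  intro c hc
  simp only [Finset.mem_Icc] at hc
  exact inner_ne_zero c hc.1

lemma padicValRat_prod (p : ℕ) [Fact p.Prime] {s : Finset ℕ} {f : ℕ → ℚ}
    (hf : ∀ i ∈ s, f i ≠ 0) :
    padicValRat p (∏ i ∈ s, f i) = ∑ i ∈ s, padicValRat p (f i) := by
  induction s using Finset.cons_induction with
  | empty => simp
  | cons a s ha ih =>
    rw [Finset.prod_cons,
      padicValRat.mul (hf a (Finset.mem_cons_self a s))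
        (Finset.prod_ne_zero_iff.2 fun i hi => hf i (Finset.mem_cons_of_mem hi)),
      ih fun i hi => hf i (Finset.mem_cons_of_mem hi), Finset.sum_cons]

theorem ord_recipFareyProd_jump (p : ℕ) (hp : p.Prime) (k : ℕ) (hk : 1 ≤ k) :
    padicValRat p (recipFareyProd (p ^ k)) - padicValRat p (recipFareyProd (p ^ k - 1)) =
      (k : ℤ) * p ^ (k - 1) * ((p : ℤ) - 1) := by
  haveI : Fact p.Prime := ⟨hp⟩
  set n := p ^ k with hn
  have hn2 : 2 ≤ n := by
    calc 2 ≤ p := hp.two_le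
    _ ≤ p ^ k := Nat.le_self_pow (by omega) p
  -- split off top term
  have hsplit : fareyProd n = fareyProd (n - 1) *
      ∏ h ∈ (Finset.Icc 1 n).filter (fun h => Nat.gcd h n = 1), (h : ℚ) / n := by
    unfold fareyProd
    have : n = (n - 1) + 1 := by omega
    rw [this, Finset.prod_Icc_succ_top (by omega)]
    rw [← this]
  -- the filter set is the totient set
  have hset : (Finset.Icc 1 n).filter (fun h => Nat.gcd h n = 1) =
      (Finset.range n).filter n.Coprime := by
    ext x
    simp only [Finset.mem_filter, Finset.mem_Icc, Finset.mem_range, Nat.Coprime]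
    constructor
    · rintro ⟨⟨h1, h2⟩, h3⟩
      refine ⟨?_, by rwa [Nat.gcd_comm]⟩
      rcases Nat.lt_or_ge x n with h | h
      · exact h
      · have : x = n := le_antisymm h2 h
        subst this
        rw [Nat.gcd_self] at h3
        omega
    · rintro ⟨h1, h2⟩
      rw [Nat.gcd_comm] at h2
      refine ⟨⟨?_, le_of_lt h1⟩, h2⟩
      rcases Nat.eq_zero_or_pos x with rfl | h
      · simp [Nat.gcd_comm] at h2; omega
      · exact h
  -- valuation of each inner factor
  have hterm : ∀ h ∈ (Finset.Icc 1 n).filter (fun h => Nat.gcd h n = 1),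
      padicValRat p ((h : ℚ) / n) = -(k : ℤ) := by
    intro h hh
    simp only [Finset.mem_filter, Finset.mem_Icc] at hh
    have hh0 : (h : ℚ) ≠ 0 := by
      have := hh.1.1; exact_mod_cast Nat.one_le_iff_ne_zero.mp this
    have hn0 : (n : ℚ) ≠ 0 := by positivity
    rw [padicValRat.div hh0 hn0]
    have hvh : padicValRat p (h : ℚ) = 0 := by
      rw [padicValRat.of_nat]
      have : ¬ p ∣ h := by
        intro hdvd
        have hpn : p ∣ n := dvd_pow_self p (Nat.one_le_iff_ne_zero.mp hk)
        have := Nat.dvd_gcd hdvd hpn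
        rw [hh.2] at this
        exact Nat.Prime.one_lt hp |>.ne' (Nat.le_antisymm (Nat.le_of_dvd one_pos this) hp.one_le ▸ rfl) |>.elim
      simp [padicValNat.eq_zero_of_not_dvd this]
    have hvn : padicValRat p (n : ℚ) = k := by
      have : (n : ℚ) = (p : ℚ) ^ k := by rw [hn]; push_cast; ring
      rw [this, padicValRat.pow (p : ℚ),
        padicValRat.self hp.one_lt]
      ring
    rw [hvh, hvn]; ring
  have hcard : ((Finset.Icc 1 n).filter (fun h => Nat.gcd h n = 1)).card = n.totient := by
    rw [hset]; rfl
  have hinner : padicValRat p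
      (∏ h ∈ (Finset.Icc 1 n).filter (fun h => Nat.gcd h n = 1), (h : ℚ) / n)
      = -(k : ℤ) * n.totient := by
    rw [padicValRat_prod p (fun i hi => by
      simp only [Finset.mem_filter, Finset.mem_Icc] at hi
      exact div_ne_zero (by exact_mod_cast Nat.one_le_iff_ne_zero.mp hi.1.1) (by positivity))]
    rw [Finset.sum_congr rfl hterm, Finset.sum_const, hcard]
    ring
  have htot : (n.totient : ℤ) = (p : ℤ) ^ (k - 1) * ((p : ℤ) - 1) := by
    rw [hn, Nat.totient_prime_pow hp (by omega)]
    push_cast [Nat.cast_sub hp.one_le]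
    ring
  unfold recipFareyProd
  rw [padicValRat.inv, padicValRat.inv, hsplit,
    padicValRat.mul (fareyProd_ne_zero _) (inner_ne_zero n (by omega)), hinner, htot]
  ring
end

section
/- For every prime p ≥ 3 and every integer n with 8p/3 ≤ n ≤ 3p−1, ord_p(F̄_n) < 0, where F̄_n is the reciprocal Farey product of order n. -/
open Finset

lemma padicValRat_finset_prod {p : ℕ} [Fact p.Prime] {α : Type*} (s : Finset α) (f : α → ℚ)
    (hf : ∀ a ∈ s, f a ≠ 0) :
    padicValRat p (∏ a ∈ s, f a) = ∑ a ∈ s, padicValRat p (f a) := by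
  induction s using Finset.cons_induction with
  | empty => simp
  | cons a s ha ih =>
    rw [Finset.prod_cons, Finset.sum_cons,
      padicValRat.mul (hf a (mem_cons_self a s)) (Finset.prod_ne_zero_iff.2 fun b hb => hf b (mem_cons_of_mem hb)),
      ih (fun b hb => hf b (mem_cons_of_mem hb))]

lemma valnat_small {p m : ℕ} (hp : p.Prime) (hm : 0 < m) (hmp : m < p ^ 2) :
    (padicValNat p m : ℤ) = if p ∣ m then 1 else 0 := by
  split_ifs with h
  · obtain ⟨t, rfl⟩ := h
    rcases Nat.eq_zero_or_pos t with rfl | ht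
    · simp at hm
    have htp : ¬ p ∣ t := by
      intro hd
      have := Nat.le_of_dvd ht hd
      nlinarith [hp.two_le, this]
    haveI : Fact p.Prime := ⟨hp⟩
    rw [padicValNat.mul hp.ne_zero ht.ne', padicValNat.self hp.one_lt,
      padicValNat.eq_zero_of_not_dvd htp]
    rfl
  · rw [padicValNat.eq_zero_of_not_dvd h]; rfl

lemma card_Ak {k : ℕ} (hk : 2 ≤ k) :
    ((Finset.Icc 1 k).filter (fun h => Nat.gcd h k = 1)).card = Nat.totient k := by
  rw [Nat.totient]
  congr 1
  ext h
  simp only [mem_filter, mem_Icc, mem_range, Nat.coprime_comm (n := h), Nat.Coprime]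
  constructor
  · rintro ⟨⟨h1, h2⟩, h3⟩
    refine ⟨lt_of_le_of_ne h2 ?_, h3⟩
    rintro rfl
    rw [Nat.gcd_self] at h3; omega
  · rintro ⟨h1, h2⟩
    refine ⟨⟨?_, h1.le⟩, h2⟩
    rcases Nat.eq_zero_or_pos h with rfl | h0
    · rw [Nat.gcd_zero_right] at h2; omega
    · omega

lemma mult_filter {p n : ℕ} (hp : p.Prime) (h2p : 2 * p ≤ n) (h3p : n < 3 * p) :
    (Finset.Icc 1 n).filter (fun k => p ∣ k) = {p, 2 * p} := by
  have hp0 := hp.two_le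
  ext k
  simp only [mem_filter, mem_Icc, Finset.mem_insert, Finset.mem_singleton]
  constructor
  · rintro ⟨⟨hk1, hk2⟩, q, rfl⟩
    have hq3 : q < 3 := by by_contra hq; push_neg at hq; nlinarith
    interval_cases q <;> omega
  · rintro (rfl | rfl) <;> refine ⟨⟨by omega, by omega⟩, ?_⟩
    · exact dvd_rfl
    · exact ⟨2, by ring⟩

lemma cardS1 {p n : ℕ} (hp : p.Prime) (h2p : 2 * p ≤ n) (h3p : n < 3 * p) :
    ((Finset.Icc 1 n).filter (fun k => p ≤ k ∧ ¬ p ∣ k)).card = n + 1 - p - 2 := by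
  have hp0 := hp.two_le
  have hset : (Finset.Icc 1 n).filter (fun k => p ≤ k ∧ ¬ p ∣ k)
      = Finset.Icc p n \ {p, 2 * p} := by
    ext k
    simp only [mem_filter, mem_Icc, Finset.mem_sdiff, Finset.mem_insert, Finset.mem_singleton]
    constructor
    · rintro ⟨⟨hk1, hk2⟩, hk3, hk4⟩
      refine ⟨⟨hk3, hk2⟩, ?_⟩
      rintro (rfl | rfl)
      · exact hk4 dvd_rfl
      · exact hk4 ⟨2, by ring⟩
    · rintro ⟨⟨hk1, hk2⟩, hk3⟩
      refine ⟨⟨by omega, hk2⟩, hk1, ?_⟩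
      rintro ⟨q, rfl⟩
      have hq3 : q < 3 := by by_contra hq; push_neg at hq; nlinarith
      interval_cases q <;> omega
  rw [hset, Finset.card_sdiff_of_subset]
  · rw [Nat.card_Icc]
    rw [Finset.card_insert_of_notMem (by simp; omega), Finset.card_singleton]
  · intro k hk
    simp only [Finset.mem_insert, Finset.mem_singleton] at hk
    rcases hk with rfl | rfl <;> simp [mem_Icc] <;> omega

lemma cardS2 {p n : ℕ} (hp2 : 2 ≤ p) (h2p : 2 * p + 1 ≤ n) :
    ((Finset.Icc 1 n).filter (fun k => 2 * p < k ∧ k % 2 = 1)).card = (n + 1) / 2 - p := by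
  have hset : (Finset.Icc 1 n).filter (fun k => 2 * p < k ∧ k % 2 = 1)
      = (Finset.Icc p ((n - 1) / 2)).image (fun j => 2 * j + 1) := by
    ext k
    simp only [mem_filter, mem_Icc, Finset.mem_image]
    constructor
    · rintro ⟨⟨hk1, hk2⟩, hk3, hk4⟩
      exact ⟨k / 2, ⟨by omega, by omega⟩, by omega⟩
    · rintro ⟨j, ⟨hj1, hj2⟩, rfl⟩
      omega
  rw [hset, Finset.card_image_of_injective _ (fun a b hab => by omega), Nat.card_Icc]
  omega

theorem ord_recipFareyProd_neg_interval (p : ℕ) (hp : p.Prime) (hp3 : 3 ≤ p)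
    (n : ℕ) (h1 : 8 * p ≤ 3 * n) (h2 : n ≤ 3 * p - 1) :
    padicValRat p (recipFareyProd n) < 0 := by
  haveI : Fact p.Prime := ⟨hp⟩
  have h2p : 2 * p + 1 ≤ n := by omega
  have h3p : n < 3 * p := by omega
  have hpsq : n < p ^ 2 := by nlinarith
  set T : ℕ → Finset ℕ := fun k => (Finset.Icc 1 k).filter (fun h => Nat.gcd h k = 1) with hT
  -- valuation of the Farey product as a double sum
  have hval : padicValRat p (fareyProd n)
      = ∑ k ∈ Finset.Icc 1 n, ∑ h ∈ T k,
          ((if p ∣ h then (1:ℤ) else 0) - (if p ∣ k then (1:ℤ) else 0)) := by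
    have hne : ∀ k ∈ Finset.Icc 1 n, ∀ h ∈ T k, (h : ℚ) / k ≠ 0 := by
      intro k hk h hh
      simp only [hT, mem_filter, mem_Icc] at hk hh
      have : (h : ℚ) ≠ 0 := Nat.cast_ne_zero.mpr (by omega)
      have : (k : ℚ) ≠ 0 := Nat.cast_ne_zero.mpr (by omega)
      positivity
    rw [fareyProd, padicValRat_finset_prod _ _
      (fun k hk => Finset.prod_ne_zero_iff.2 (fun h hh => hne k hk h hh))]
    refine Finset.sum_congr rfl fun k hk => ?_
    rw [padicValRat_finset_prod _ _ (fun h hh => hne k hk h hh)]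
    refine Finset.sum_congr rfl fun h hh => ?_
    simp only [hT, mem_filter, mem_Icc] at hk hh
    rw [padicValRat.div (Nat.cast_ne_zero.mpr (by omega)) (Nat.cast_ne_zero.mpr (by omega)),
      padicValRat.of_nat, padicValRat.of_nat,
      valnat_small hp (by omega) (by omega), valnat_small hp (by omega) (by omega)]
  -- split into positive and negative parts
  have hsplit : padicValRat p (fareyProd n)
      = (∑ k ∈ Finset.Icc 1 n, (((T k).filter (fun h => p ∣ h)).card : ℤ))
        - ∑ k ∈ Finset.Icc 1 n, (if p ∣ k then ((T k).card : ℤ) else 0) := by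
    rw [hval, ← Finset.sum_sub_distrib]
    refine Finset.sum_congr rfl fun k hk => ?_
    rw [Finset.sum_sub_distrib, Finset.sum_boole, Finset.sum_const]
    congr 1
    split_ifs <;> simp
  -- negative part equals 2 * (p - 1)
  have hB : ∑ k ∈ Finset.Icc 1 n, (if p ∣ k then ((T k).card : ℤ) else 0)
      = (p - 1 : ℕ) + (p - 1 : ℕ) := by
    rw [← Finset.sum_filter, mult_filter hp (by omega) h3p,
      Finset.sum_insert (by simp; omega), Finset.sum_singleton]
    have c1 : (T p).card = p - 1 := by
      rw [card_Ak (by omega), Nat.totient_prime hp]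
    have c2 : (T (2 * p)).card = p - 1 := by
      have hcop : Nat.Coprime 2 p := Nat.coprime_two_left.mpr (hp.odd_of_ne_two (by omega))
      rw [card_Ak (by omega), Nat.totient_mul hcop, Nat.totient_two, Nat.totient_prime hp,
        one_mul]
    rw [c1, c2]
  -- positive part lower bound
  have hA : (((Finset.Icc 1 n).filter (fun k => p ≤ k ∧ ¬ p ∣ k)).card : ℤ)
        + (((Finset.Icc 1 n).filter (fun k => 2 * p < k ∧ k % 2 = 1)).card : ℤ)
      ≤ ∑ k ∈ Finset.Icc 1 n, (((T k).filter (fun h => p ∣ h)).card : ℤ) := by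
    rw [← Finset.sum_boole, ← Finset.sum_boole, ← Finset.sum_add_distrib]
    refine Finset.sum_le_sum fun k hk => ?_
    simp only [mem_Icc] at hk
    have hmem1 : (p ≤ k ∧ ¬ p ∣ k) → p ∈ (T k).filter (fun h => p ∣ h) := by
      rintro ⟨hc1, hc2⟩
      simp only [hT, mem_filter, mem_Icc]
      exact ⟨⟨⟨by omega, hc1⟩, (hp.coprime_iff_not_dvd.mpr hc2)⟩, dvd_rfl⟩
    have hmem2 : (2 * p < k ∧ k % 2 = 1) → 2 * p ∈ (T k).filter (fun h => p ∣ h) := by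
      rintro ⟨hc1, hc2⟩
      have hpk : ¬ p ∣ k := by
        rintro ⟨q, rfl⟩
        have hq3 : q < 3 := by by_contra hq; push_neg at hq; nlinarith
        interval_cases q <;> omega
      have hcop : Nat.Coprime (2 * p) k :=
        Nat.Coprime.mul (Nat.coprime_two_left.mpr (Nat.odd_iff.mpr hc2))
          (hp.coprime_iff_not_dvd.mpr hpk)
      simp only [hT, mem_filter, mem_Icc]
      exact ⟨⟨⟨by omega, by omega⟩, hcop⟩, ⟨2, by ring⟩⟩
    by_cases hc1 : p ≤ k ∧ ¬ p ∣ k <;> by_cases hc2 : 2 * p < k ∧ k % 2 = 1 <;>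
      simp only [hc1, hc2, if_true, if_false, if_pos, if_neg, not_false_iff]
    · have hsub : ({p, 2 * p} : Finset ℕ) ⊆ (T k).filter (fun h => p ∣ h) := by
        intro x hx
        simp only [Finset.mem_insert, Finset.mem_singleton] at hx
        rcases hx with rfl | rfl
        · exact hmem1 hc1
        · exact hmem2 hc2
      have := Finset.card_le_card hsub
      rw [Finset.card_pair (by omega)] at this
      omega
    · have := Finset.card_pos.mpr ⟨p, hmem1 hc1⟩
      omega
    · have := Finset.card_pos.mpr ⟨2 * p, hmem2 hc2⟩
      omega
    · positivity
  rw [recipFareyProd, padicValRat.inv]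
  have e1 := cardS1 hp (by omega) h3p
  have e2 := cardS2 hp.two_le h2p
  rw [e1, e2] at hA
  rw [hsplit, hB] at *
  omega
end

section
/- For a fixed prime p, the p-adic valuation of the denominator product D_n = ∏_{1≤h≤k≤n, gcd(h,k)=1} k of the Farey fractions of order n equals ∑_{b=1}^{⌊log_p n⌋} ∑_{a=1}^{⌊n/p^b⌋} φ(a·p^b). -/
open Finset

/-- The product D_n of the denominators of all reduced Farey fractions of order n. -/
def fareyDenomProd (n : ℕ) : ℕ :=
  ∏ k ∈ Finset.Icc 1 n, ∏ h ∈ (Finset.Icc 1 k).filter (fun h => Nat.gcd h k = 1), k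

lemma aux_card_totient (k : ℕ) (hk : 1 ≤ k) :
    #((Finset.Icc 1 k).filter (fun h => Nat.gcd h k = 1)) = k.totient := by
  rcases eq_or_lt_of_le hk with h1 | h2
  · rw [← h1]; decide
  · rw [Nat.totient_eq_card_coprime]
    congr 1
    ext h
    simp only [mem_filter, mem_Icc, mem_range, Nat.Coprime]
    constructor
    · rintro ⟨⟨hh1, hh2⟩, hg⟩
      have hne : h ≠ k := by
        rintro rfl
        rw [Nat.gcd_self] at hg
        omega
      exact ⟨lt_of_le_of_ne hh2 hne, by rwa [Nat.gcd_comm]⟩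
    · rintro ⟨hlt, hg⟩
      have h0 : h ≠ 0 := by
        rintro rfl
        rw [Nat.gcd_zero_right] at hg
        omega
      exact ⟨⟨by omega, le_of_lt hlt⟩, by rwa [Nat.gcd_comm] at hg⟩

theorem padicValNat_fareyDenomProd (p : ℕ) (hp : p.Prime) (n : ℕ) (hn : 1 ≤ n) :
    padicValNat p (fareyDenomProd n) =
      ∑ b ∈ Finset.Icc 1 (Nat.log p n), ∑ a ∈ Finset.Icc 1 (n / p ^ b),
        Nat.totient (a * p ^ b) := by
  haveI : Fact p.Prime := ⟨hp⟩
  have hD : fareyDenomProd n = ∏ k ∈ Finset.Icc 1 n, k ^ k.totient := by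
    unfold fareyDenomProd
    refine Finset.prod_congr rfl fun k hk => ?_
    rw [Finset.prod_const, aux_card_totient k (Finset.mem_Icc.mp hk).1]
  have hne : ∀ k ∈ Finset.Icc 1 n, k ^ k.totient ≠ 0 := by
    intro k hk
    have := (Finset.mem_Icc.mp hk).1
    positivity
  have hL : padicValNat p (fareyDenomProd n) =
      ∑ k ∈ Finset.Icc 1 n, k.totient * k.factorization p := by
    rw [hD, ← Nat.factorization_def _ hp, Nat.factorization_prod hne,
      Finsupp.finset_sum_apply]
    refine Finset.sum_congr rfl fun k hk => ?_
    rw [Nat.factorization_pow]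
    simp
  rw [hL]
  have hval : ∀ k ∈ Finset.Icc 1 n,
      k.factorization p = #((Finset.Icc 1 (Nat.log p n)).filter (fun b => p ^ b ∣ k)) := by
    intro k hk
    obtain ⟨hk1, hkn⟩ := Finset.mem_Icc.mp hk
    have heq : (Finset.Icc 1 (Nat.log p n)).filter (fun b => p ^ b ∣ k) =
        Finset.Icc 1 (k.factorization p) := by
      ext b
      simp only [mem_filter, mem_Icc]
      constructor
      · rintro ⟨⟨hb1, _⟩, hd⟩
        exact ⟨hb1, (Nat.Prime.pow_dvd_iff_le_factorization hp (by omega)).mp hd⟩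
      · rintro ⟨hb1, hb2⟩
        have hdvd : p ^ b ∣ k :=
          (Nat.Prime.pow_dvd_iff_le_factorization hp (by omega)).mpr hb2
        have hle : p ^ b ≤ n := le_trans (Nat.le_of_dvd (by omega) hdvd) hkn
        exact ⟨⟨hb1, (Nat.le_log_iff_pow_le hp.one_lt (by omega)).mpr hle⟩, hdvd⟩
    rw [heq, Nat.card_Icc]
    omega
  calc ∑ k ∈ Finset.Icc 1 n, k.totient * k.factorization p
      = ∑ k ∈ Finset.Icc 1 n, ∑ b ∈ (Finset.Icc 1 (Nat.log p n)).filter (fun b => p ^ b ∣ k),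
          k.totient := by
        refine Finset.sum_congr rfl fun k hk => ?_
        rw [Finset.sum_const, hval k hk, mul_comm, smul_eq_mul]
    _ = ∑ k ∈ Finset.Icc 1 n, ∑ b ∈ Finset.Icc 1 (Nat.log p n),
          if p ^ b ∣ k then k.totient else 0 := by
        refine Finset.sum_congr rfl fun k _ => ?_
        rw [Finset.sum_filter]
    _ = ∑ b ∈ Finset.Icc 1 (Nat.log p n), ∑ k ∈ Finset.Icc 1 n,
          if p ^ b ∣ k then k.totient else 0 := Finset.sum_comm
    _ = ∑ b ∈ Finset.Icc 1 (Nat.log p n), ∑ a ∈ Finset.Icc 1 (n / p ^ b),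
          Nat.totient (a * p ^ b) := by
        refine Finset.sum_congr rfl fun b hb => ?_
        rw [← Finset.sum_filter]
        have hpb : 0 < p ^ b := Nat.pow_pos hp.pos
        refine Finset.sum_nbij' (fun k => k / p ^ b) (fun a => a * p ^ b) ?_ ?_ ?_ ?_ ?_
        · intro k hk
          simp only [mem_filter, mem_Icc] at hk ⊢
          obtain ⟨⟨hk1, hkn⟩, hd⟩ := hk
          constructor
          · exact Nat.one_le_div_iff hpb |>.mpr (Nat.le_of_dvd (by omega) hd)
          · exact Nat.div_le_div_right hkn
        · intro a ha
          simp only [mem_filter, mem_Icc] at ha ⊢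
          obtain ⟨ha1, ha2⟩ := ha
          refine ⟨⟨?_, ?_⟩, ⟨a, mul_comm a _⟩⟩
          · calc 1 ≤ p ^ b := hpb
              _ ≤ a * p ^ b := Nat.le_mul_of_pos_left _ (by omega)
          · exact (Nat.le_div_iff_mul_le hpb).mp ha2
        · intro k hk
          simp only [mem_filter] at hk
          exact Nat.div_mul_cancel hk.2
        · intro a _
          exact Nat.mul_div_cancel a hpb
        · intro k hk
          simp only [mem_filter] at hk
          rw [Nat.div_mul_cancel hk.2]
end

section
/- Let p be an odd prime. For 1 ≤ k ≤ p−1 write ⌊(p²−1)/k⌋ = a_k·p + b_k with 0 ≤ b_k ≤ p−1 (so a_k = ⌊(p−1)/k⌋). Then ord_p(∏_{j=0}^{m} C(m,j)) = a_k·(p−1−b_k), where m = ⌊(p²−1)/k⌋. -/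
open Finset

private lemma carry_iff (p : ℕ) (hp : 1 < p) {m j : ℕ} (hj : j ≤ m) :
    (p ≤ j % p + (m - j) % p) ↔ m % p < j % p := by
  have hp0 : 0 < p := by omega
  have h1 : j % p < p := Nat.mod_lt _ hp0
  have h2 : (m - j) % p < p := Nat.mod_lt _ hp0
  have h3 : ((m - j) % p + j % p) % p = m % p := by
    rw [← Nat.add_mod, Nat.sub_add_cancel hj]
  by_cases h : (m - j) % p + j % p < p
  · rw [Nat.mod_eq_of_lt h] at h3
    omega
  · push_neg at h
    rw [Nat.mod_eq_sub_mod h, Nat.mod_eq_of_lt (by omega)] at h3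
    omega

private lemma sum_const_block (p b : ℕ) (hb : b < p) :
    (∑ j ∈ Finset.range p, if b < j then 1 else 0) = p - 1 - b := by
  rw [← Finset.card_filter]
  have : (Finset.range p).filter (fun j => b < j) = Finset.Ico (b + 1) p := by
    ext x
    simp [Finset.mem_filter, Finset.mem_range, Finset.mem_Ico]
    omega
  rw [this, Nat.card_Ico]
  omega

private lemma sum_blocks (p b : ℕ) (hb : b < p) :
    ∀ a : ℕ, (∑ j ∈ Finset.range (a * p), if b < j % p then 1 else 0) = a * (p - 1 - b) := by
  intro a
  induction a with
  | zero => simp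
  | succ a ih =>
    rw [show (a + 1) * p = a * p + p by ring, Finset.sum_range_add, ih]
    have : ∀ i ∈ Finset.range p,
        (if b < (a * p + i) % p then 1 else 0) = (if b < i then 1 else 0) := by
      intro i hi
      rw [Finset.mem_range] at hi
      rw [show a * p + i = i + a * p by ring, Nat.add_mul_mod_self_right,
        Nat.mod_eq_of_lt hi]
    rw [Finset.sum_congr rfl this, sum_const_block p b hb]
    ring

theorem padicValNat_binomial_prod_near_p_sq (p : ℕ) (hp : p.Prime) (hodd : Odd p)
    (k : ℕ) (hk1 : 1 ≤ k) (hk2 : k ≤ p - 1) :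
    padicValNat p (∏ j ∈ Finset.range ((p ^ 2 - 1) / k + 1),
        Nat.choose ((p ^ 2 - 1) / k) j) =
      ((p - 1) / k) * (p - 1 - ((p ^ 2 - 1) / k - p * ((p - 1) / k))) := by
  haveI : Fact p.Prime := ⟨hp⟩
  have hp1 : 1 < p := hp.one_lt
  set m : ℕ := (p ^ 2 - 1) / k with hm
  obtain ⟨t, ht⟩ : ∃ t, p = t + 1 := ⟨p - 1, by omega⟩
  have hpt : p - 1 = t := by omega
  have hsq : p ^ 2 - 1 = t * t + 2 * t := by
    have : p ^ 2 = t * t + 2 * t + 1 := by rw [ht]; ring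
    omega
  -- the quotient by p
  set q : ℕ := (p - 1) / k with hq
  have hqr : k * q + (p - 1) % k = p - 1 := Nat.div_add_mod (p - 1) k
  have hr : (p - 1) % k < k := Nat.mod_lt _ (by omega)
  set r : ℕ := (p - 1) % k with hrr
  have hkey : p ^ 2 - 1 = q * (k * p) + (r * p + t) := by
    rw [hsq, ht]
    calc t * t + 2 * t = (k * q + r) * (t + 1) + t := by rw [hqr, hpt]; ring
      _ = q * (k * (t + 1)) + (r * (t + 1) + t) := by ring
  have hlt : r * p + t < k * p := by
    have h1 : (r + 1) * p ≤ k * p := Nat.mul_le_mul_right _ (by omega)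
    have h2 : r * p + t < (r + 1) * p := by rw [ht]; nlinarith
    omega
  have hmp : m / p = q := by
    rw [hm, Nat.div_div_eq_div_mul, hkey, mul_comm q (k * p),
      Nat.mul_add_div (by positivity), Nat.div_eq_of_lt hlt, Nat.add_zero]
  have hmod : m % p = m - p * q := by
    have := Nat.mod_add_div m p
    rw [hmp] at this
    omega
  have hbp : m % p < p := Nat.mod_lt _ (by omega)
  -- m is positive and below p^2
  have hmlt : m < p ^ 2 := by
    have : m ≤ p ^ 2 - 1 := Nat.div_le_self _ _
    have hp2 : 1 ≤ p ^ 2 := Nat.one_le_pow _ _ (by omega)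
    omega
  have hm0 : m ≠ 0 := by
    have : k ≤ p ^ 2 - 1 := by
      have : p ≤ p ^ 2 := by nlinarith [sq_nonneg p, pow_two p]
      omega
    have : 1 ≤ m := (Nat.one_le_div_iff (by omega)).2 this
    omega
  have hlog : Nat.log p m < 2 := Nat.log_lt_of_lt_pow hm0 hmlt
  -- Kummer's theorem for each factor
  have hkum : ∀ j ∈ Finset.range (m + 1),
      padicValNat p (Nat.choose m j) = if m % p < j % p then 1 else 0 := by
    intro j hj
    rw [Finset.mem_range] at hj
    have hjm : j ≤ m := by omega
    rw [padicValNat_choose hjm hlog]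
    rw [show Finset.Ico 1 2 = {1} from rfl, Finset.filter_singleton]
    simp only [pow_one]
    by_cases h : p ≤ j % p + (m - j) % p
    · rw [if_pos h, if_pos ((carry_iff p hp1 hjm).1 h)]
      simp
    · rw [if_neg h, if_neg (fun hc => h ((carry_iff p hp1 hjm).2 hc))]
      simp
  -- valuation of the product is the sum of valuations
  have hprod : padicValNat p (∏ j ∈ Finset.range (m + 1), Nat.choose m j) =
      ∑ j ∈ Finset.range (m + 1), padicValNat p (Nat.choose m j) := by
    have hne : ∀ j ∈ Finset.range (m + 1), Nat.choose m j ≠ 0 := by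
      intro j hj
      rw [Finset.mem_range] at hj
      exact (Nat.choose_pos (by omega)).ne'
    have h1 : (∏ j ∈ Finset.range (m + 1), Nat.choose m j).factorization =
        ∑ j ∈ Finset.range (m + 1), (Nat.choose m j).factorization :=
      Nat.factorization_prod hne
    have h2 := congrArg (fun f => f p) h1
    simp only [Finsupp.coe_finset_sum, Finset.sum_apply] at h2
    rw [← Nat.factorization_def _ hp, h2]
    exact Finset.sum_congr rfl fun j hj => Nat.factorization_def _ hp
  rw [hprod, Finset.sum_congr rfl hkum]
  -- split the range
  have hsplit : m + 1 = (m / p) * p + (m % p + 1) := by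
    have h := Nat.mod_add_div m p
    have h2 : m / p * p = p * (m / p) := Nat.mul_comm _ _
    omega
  rw [hsplit, Finset.sum_range_add, sum_blocks p (m % p) hbp]
  have htail : ∀ i ∈ Finset.range (m % p + 1),
      (if m % p < (m / p * p + i) % p then 1 else 0) = 0 := by
    intro i hi
    rw [Finset.mem_range] at hi
    have hip : i < p := lt_of_lt_of_le hi hbp
    rw [show m / p * p + i = i + (m / p) * p by ring, Nat.add_mul_mod_self_right,
      Nat.mod_eq_of_lt hip]
    exact if_neg (Nat.not_lt.2 (Nat.lt_succ_iff.mp hi))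
  rw [Finset.sum_congr rfl htail, Finset.sum_const_zero, add_zero, hmp, hmod]
end
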